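/- arXiv:math/0305104 — 7 statements merged into one kernel-verified Lean document; each statement's English description precedes it below -/
import Mathlib

section
/- The point β* = √2/4 is a global minimizer of g over ℝ, with minimal value g(√2/4) = (2 - √2)/48; i.e., for all β ∈ ℝ, g(β) ≥ (2 - √2)/48. -/
/-!
The substitution `t ↦ 1 - t` turns the second integral into the first, so
`g β = ∫₀^{1/2} t |t - β| dt`, a weighted `L¹` distance from `β`. Such a function is minimised at
every weighted median `b` of the weight: splitting at `b` and using `|t - β| ≥ ±(t - β)` gives
`g β ≥ g b + (β - b) (∫₀^b t dt - ∫_b^{1/2} t dt)`, and the median condition `b² = 1/8` kills the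
linear term. The value at `b = √2/4` is then an integral of two cubic polynomials.
-/

open MeasureTheory Real intervalIntegral

section WeightedAbs

variable {w : ℝ → ℝ} {a b c : ℝ}

lemma IntervalIntegrable.mul_abs_sub (hw : IntervalIntegrable w volume a c) (β : ℝ) :
    IntervalIntegrable (fun t => w t * |t - β|) volume a c :=
  hw.mul_continuousOn (continuous_id.sub continuous_const).abs.continuousOn

lemma integral_mul_abs_sub_eq (hab : a ≤ b) (hbc : b ≤ c) (hw : IntervalIntegrable w volume a c) :
    ∫ t in a..c, w t * |t - b| = (∫ t in b..c, w t * (t - b)) - ∫ t in a..b, w t * (t - b) := by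
  have hwab : IntervalIntegrable w volume a b :=
    hw.mono_set (Set.uIcc_subset_uIcc Set.left_mem_uIcc (Set.mem_uIcc_of_le hab hbc))
  have hwbc : IntervalIntegrable w volume b c :=
    hw.mono_set (Set.uIcc_subset_uIcc (Set.mem_uIcc_of_le hab hbc) Set.right_mem_uIcc)
  rw [← integral_add_adjacent_intervals (hwab.mul_abs_sub b) (hwbc.mul_abs_sub b), sub_eq_neg_add,
    ← intervalIntegral.integral_neg]
  congr 1
  · refine integral_congr fun t ht => ?_
    rw [Set.uIcc_of_le hab] at ht
    rw [abs_of_nonpos (sub_nonpos.2 ht.2)]; ring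
  · refine integral_congr fun t ht => ?_
    rw [Set.uIcc_of_le hbc] at ht
    rw [abs_of_nonneg (sub_nonneg.2 ht.1)]

lemma le_integral_mul_abs_sub (hab : a ≤ b) (hbc : b ≤ c) (hw : IntervalIntegrable w volume a c)
    (hw0 : ∀ t ∈ Set.Icc a c, 0 ≤ w t) (β : ℝ) :
    (∫ t in a..c, w t * |t - b|) + (β - b) * ((∫ t in a..b, w t) - ∫ t in b..c, w t) ≤
      ∫ t in a..c, w t * |t - β| := by
  have hwab : IntervalIntegrable w volume a b :=
    hw.mono_set (Set.uIcc_subset_uIcc Set.left_mem_uIcc (Set.mem_uIcc_of_le hab hbc))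
  have hwbc : IntervalIntegrable w volume b c :=
    hw.mono_set (Set.uIcc_subset_uIcc (Set.mem_uIcc_of_le hab hbc) Set.right_mem_uIcc)
  have left : (∫ t in a..b, w t * |t - b|) + (β - b) * ∫ t in a..b, w t ≤
      ∫ t in a..b, w t * |t - β| := by
    rw [← intervalIntegral.integral_const_mul,
      ← integral_add (hwab.mul_abs_sub b) (hwab.const_mul _)]
    refine integral_mono_on hab ((hwab.mul_abs_sub b).add (hwab.const_mul _)) (hwab.mul_abs_sub β)
      fun t ht => ?_
    have hw0t := hw0 t ⟨ht.1, ht.2.trans hbc⟩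
    rw [abs_of_nonpos (sub_nonpos.2 ht.2)]
    nlinarith [neg_abs_le (t - β)]
  have right : (∫ t in b..c, w t * |t - b|) - (β - b) * ∫ t in b..c, w t ≤
      ∫ t in b..c, w t * |t - β| := by
    rw [← intervalIntegral.integral_const_mul,
      ← integral_sub (hwbc.mul_abs_sub b) (hwbc.const_mul _)]
    refine integral_mono_on hbc ((hwbc.mul_abs_sub b).sub (hwbc.const_mul _)) (hwbc.mul_abs_sub β)
      fun t ht => ?_
    have hw0t := hw0 t ⟨hab.trans ht.1, ht.2⟩
    rw [abs_of_nonneg (sub_nonneg.2 ht.1)]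
    nlinarith [le_abs_self (t - β)]
  rw [← integral_add_adjacent_intervals (hwab.mul_abs_sub b) (hwbc.mul_abs_sub b),
    ← integral_add_adjacent_intervals (hwab.mul_abs_sub β) (hwbc.mul_abs_sub β)]
  linarith

lemma integral_mul_abs_sub_le_of_median (hab : a ≤ b) (hbc : b ≤ c)
    (hw : IntervalIntegrable w volume a c) (hw0 : ∀ t ∈ Set.Icc a c, 0 ≤ w t)
    (hmed : ∫ t in a..b, w t = ∫ t in b..c, w t) (β : ℝ) :
    ∫ t in a..c, w t * |t - b| ≤ ∫ t in a..c, w t * |t - β| := by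
  simpa [hmed] using le_integral_mul_abs_sub hab hbc hw hw0 β

end WeightedAbs

lemma integral_mul_sub (a c p : ℝ) :
    ∫ t in a..c, t * (t - p) = (c ^ 3 - a ^ 3) / 3 - p * (c ^ 2 - a ^ 2) / 2 := by
  simp_rw [mul_sub, ← sq]
  rw [intervalIntegral.integral_sub ((continuous_pow 2).intervalIntegrable _ _)
      ((continuous_mul_const p).intervalIntegrable _ _), integral_pow,
    intervalIntegral.integral_mul_const, integral_id]
  ring

lemma integral_half_one_eq_integral_zero_half (β : ℝ) :
    ∫ t in (1/2 : ℝ)..1, |t - 1 + β| * (1 - t) = ∫ t in (0 : ℝ)..(1/2), t * |t - β| := by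
  calc ∫ t in (1/2 : ℝ)..1, |t - 1 + β| * (1 - t)
      = ∫ t in (1/2 : ℝ)..1, (fun s => s * |s - β|) (1 - t) :=
        integral_congr fun t _ => by rw [mul_comm, ← abs_neg]; ring_nf
    _ = ∫ t in (0 : ℝ)..(1/2), t * |t - β| :=
        (integral_comp_sub_left (fun s => s * |s - β|) 1).trans (by norm_num)

lemma sqrt_two_div_four_le_half : Real.sqrt 2 / 4 ≤ 1 / 2 := by
  nlinarith [Real.sq_sqrt (zero_le_two : (0 : ℝ) ≤ 2), Real.sqrt_nonneg 2]

lemma integral_id_zero_sqrt_two_div_four :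
    ∫ t in (0 : ℝ)..(Real.sqrt 2 / 4), t = ∫ t in (Real.sqrt 2 / 4)..(1 / 2), t := by
  rw [integral_id, integral_id]
  linear_combination (1 / 16 : ℝ) * Real.sq_sqrt (zero_le_two : (0 : ℝ) ≤ 2)

lemma integral_mul_abs_sub_sqrt_two_div_four :
    ∫ t in (0 : ℝ)..(1 / 2), t * |t - Real.sqrt 2 / 4| = (2 - Real.sqrt 2) / 48 := by
  rw [integral_mul_abs_sub_eq (by positivity) sqrt_two_div_four_le_half
    intervalIntegrable_id, integral_mul_sub, integral_mul_sub]
  linear_combination (Real.sqrt 2 / 192) * Real.sq_sqrt (zero_le_two : (0 : ℝ) ≤ 2)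

theorem stmt_3 :
    (((1/2) * ∫ t in (0:ℝ)..(1/2), t * |t - Real.sqrt 2 / 4|) +
      ((1/2) * ∫ t in (1/2:ℝ)..1, |t - 1 + Real.sqrt 2 / 4| * (1 - t))
        = (2 - Real.sqrt 2) / 48) ∧
    ∀ β : ℝ,
      ((1/2) * ∫ t in (0:ℝ)..(1/2), t * |t - β|) +
        ((1/2) * ∫ t in (1/2:ℝ)..1, |t - 1 + β| * (1 - t))
          ≥ (2 - Real.sqrt 2) / 48 := by
  have hg (β : ℝ) : ((1/2) * ∫ t in (0:ℝ)..(1/2), t * |t - β|) +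
      ((1/2) * ∫ t in (1/2:ℝ)..1, |t - 1 + β| * (1 - t)) = ∫ t in (0:ℝ)..(1/2), t * |t - β| := by
    rw [integral_half_one_eq_integral_zero_half]; ring
  refine ⟨(hg _).trans integral_mul_abs_sub_sqrt_two_div_four, fun β => ?_⟩
  rw [hg, ge_iff_le, ← integral_mul_abs_sub_sqrt_two_div_four]
  exact integral_mul_abs_sub_le_of_median (by positivity) sqrt_two_div_four_le_half
    intervalIntegrable_id (fun t ht => ht.1) integral_id_zero_sqrt_two_div_four β
end

section
/- If f is twice differentiable on an open interval containing [0,1] with f'' bounded and integrable, then |∫₀¹ f(t) dt - (√2/8) f(0) - (1 - √2/4) f(1/2) - (√2/8) f(1)| ≤ ((2 - √2)/48) · sup_{t ∈ [0,1]} |f''(t)|. -/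
open MeasureTheory Real Set

theorem stmt_4 (f f' f'' : ℝ → ℝ) (c d : ℝ)
    (hsub : Icc (0:ℝ) 1 ⊆ Ioo c d)
    (hd1 : ∀ t ∈ Ioo c d, HasDerivAt f (f' t) t)
    (hd2 : ∀ t ∈ Ioo c d, HasDerivAt f' (f'' t) t)
    (hbd : ∃ M, ∀ t ∈ Ioo c d, |f'' t| ≤ M)
    (hint : IntervalIntegrable f'' volume 0 1) :
    |(∫ t in (0:ℝ)..1, f t) - Real.sqrt 2 / 8 * f 0
        - (1 - Real.sqrt 2 / 4) * f (1/2) - Real.sqrt 2 / 8 * f 1|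
      ≤ (2 - Real.sqrt 2) / 48 * sSup ((fun t => |f'' t|) '' Icc (0:ℝ) 1) := by
  have s2 : Real.sqrt 2 ^ 2 = 2 := Real.sq_sqrt (by norm_num)
  have s0 : (0:ℝ) ≤ Real.sqrt 2 := Real.sqrt_nonneg 2
  set s := Real.sqrt 2 with hsdef
  have hs1 : 1 ≤ s := by nlinarith
  have hs2 : s ≤ 3/2 := by nlinarith
  -- subset facts
  have h01 : uIcc (0:ℝ) (1/2) ⊆ Icc (0:ℝ) 1 := by
    rw [uIcc_of_le (by norm_num)]; exact Icc_subset_Icc le_rfl (by norm_num)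
  have h12 : uIcc (1/2 : ℝ) 1 ⊆ Icc (0:ℝ) 1 := by
    rw [uIcc_of_le (by norm_num)]; exact Icc_subset_Icc (by norm_num) le_rfl
  have h011 : uIcc (0:ℝ) 1 = Icc (0:ℝ) 1 := uIcc_of_le (by norm_num)
  -- integrability of f''
  have hint01 : IntervalIntegrable f'' volume 0 (1/2) :=
    hint.mono_set (by rw [h011]; exact h01)
  have hint12 : IntervalIntegrable f'' volume (1/2) 1 :=
    hint.mono_set (by rw [h011]; exact h12)
  -- continuity and integrability of f and f'
  have hfc : ∀ t ∈ Icc (0:ℝ) 1, ContinuousWithinAt f (Icc (0:ℝ) 1) t :=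
    fun t ht => ((hd1 t (hsub ht)).continuousAt).continuousWithinAt
  have hf'c : ∀ t ∈ Icc (0:ℝ) 1, ContinuousWithinAt f' (Icc (0:ℝ) 1) t :=
    fun t ht => ((hd2 t (hsub ht)).continuousAt).continuousWithinAt
  have hfint01 : IntervalIntegrable f volume 0 (1/2) :=
    ContinuousOn.intervalIntegrable (fun t ht => (hfc t (h01 ht)).mono h01)
  have hfint12 : IntervalIntegrable f volume (1/2) 1 :=
    ContinuousOn.intervalIntegrable (fun t ht => (hfc t (h12 ht)).mono h12)
  have hf'int01 : IntervalIntegrable f' volume 0 (1/2) :=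
    ContinuousOn.intervalIntegrable (fun t ht => (hf'c t (h01 ht)).mono h01)
  have hf'int12 : IntervalIntegrable f' volume (1/2) 1 :=
    ContinuousOn.intervalIntegrable (fun t ht => (hf'c t (h12 ht)).mono h12)
  -- polynomial derivatives
  have hg1 : ∀ t : ℝ, HasDerivAt (fun x => x^2/2 - s/8*x) (t - s/8) t := by
    intro t
    have h1 := ((hasDerivAt_pow 2 t).div_const 2).sub ((hasDerivAt_id t).const_mul (s/8))
    exact h1.congr_deriv (by push_cast; ring)
  have hg2 : ∀ t : ℝ, HasDerivAt (fun x => (1-x)^2/2 - s/8*(1-x)) (t - 1 + s/8) t := by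
    intro t
    have h0 : HasDerivAt (fun x : ℝ => 1 - x) (-1) t := by
      simpa using (hasDerivAt_id t).const_sub (1:ℝ)
    have h1 := (((h0.pow 2)).div_const 2).sub (h0.const_mul (s/8))
    exact h1.congr_deriv (by push_cast; ring)
  have hlin : ∀ t : ℝ, HasDerivAt (fun x : ℝ => x - s/8) 1 t := by
    intro t; simpa using (hasDerivAt_id t).sub_const (s/8)
  have hlin2 : ∀ t : ℝ, HasDerivAt (fun x : ℝ => x - 1 + s/8) 1 t := by
    intro t
    have := ((hasDerivAt_id t).sub_const (1:ℝ)).add_const (s/8)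
    simpa using this
  -- integration by parts on [0, 1/2]
  have ibpA1 : ∫ x in (0:ℝ)..(1/2), (x^2/2 - s/8*x) * f'' x
      = ((1/2:ℝ)^2/2 - s/8*(1/2)) * f' (1/2) - ((0:ℝ)^2/2 - s/8*0) * f' 0
        - ∫ x in (0:ℝ)..(1/2), (x - s/8) * f' x := by
    apply intervalIntegral.integral_mul_deriv_eq_deriv_mul
    · exact fun x hx => hg1 x
    · exact fun x hx => hd2 x (hsub (h01 hx))
    · exact (continuous_id.sub continuous_const).continuousOn.intervalIntegrable
    · exact hint01
  have ibpA2 : ∫ x in (0:ℝ)..(1/2), (x - s/8) * f' x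
      = ((1/2:ℝ) - s/8) * f (1/2) - ((0:ℝ) - s/8) * f 0
        - ∫ x in (0:ℝ)..(1/2), 1 * f x := by
    apply intervalIntegral.integral_mul_deriv_eq_deriv_mul
    · exact fun x hx => hlin x
    · exact fun x hx => hd1 x (hsub (h01 hx))
    · exact continuousOn_const.intervalIntegrable
    · exact hf'int01
  -- integration by parts on [1/2, 1]
  have ibpB1 : ∫ x in (1/2:ℝ)..1, ((1-x)^2/2 - s/8*(1-x)) * f'' x
      = ((1-(1:ℝ))^2/2 - s/8*(1-1)) * f' 1 - ((1-(1/2:ℝ))^2/2 - s/8*(1-1/2)) * f' (1/2)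
        - ∫ x in (1/2:ℝ)..1, (x - 1 + s/8) * f' x := by
    apply intervalIntegral.integral_mul_deriv_eq_deriv_mul
    · exact fun x hx => hg2 x
    · exact fun x hx => hd2 x (hsub (h12 hx))
    · exact (Continuous.add (continuous_id.sub continuous_const)
        continuous_const).continuousOn.intervalIntegrable
    · exact hint12
  have ibpB2 : ∫ x in (1/2:ℝ)..1, (x - 1 + s/8) * f' x
      = ((1:ℝ) - 1 + s/8) * f 1 - ((1/2:ℝ) - 1 + s/8) * f (1/2)
        - ∫ x in (1/2:ℝ)..1, 1 * f x := by
    apply intervalIntegral.integral_mul_deriv_eq_deriv_mul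
    · exact fun x hx => hlin2 x
    · exact fun x hx => hd1 x (hsub (h12 hx))
    · exact continuousOn_const.intervalIntegrable
    · exact hf'int12
  simp only [one_mul] at ibpA2 ibpB2
  -- the key identity
  have hsplit : (∫ t in (0:ℝ)..(1/2), f t) + ∫ t in (1/2:ℝ)..1, f t = ∫ t in (0:ℝ)..1, f t :=
    intervalIntegral.integral_add_adjacent_intervals hfint01 hfint12
  set A := ∫ x in (0:ℝ)..(1/2), (x^2/2 - s/8*x) * f'' x with hA
  set B := ∫ x in (1/2:ℝ)..1, ((1-x)^2/2 - s/8*(1-x)) * f'' x with hB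
  have key : (∫ t in (0:ℝ)..1, f t) - s / 8 * f 0
      - (1 - s / 4) * f (1/2) - s / 8 * f 1 = A + B := by
    rw [← hsplit, ibpA1, ibpB1, ibpA2, ibpB2]; ring
  rw [key]
  -- sup bound
  set M := sSup ((fun t => |f'' t|) '' Icc (0:ℝ) 1) with hMdef
  have hbdd : BddAbove ((fun t => |f'' t|) '' Icc (0:ℝ) 1) := by
    obtain ⟨M₀, hM₀⟩ := hbd
    exact ⟨M₀, fun y ⟨t, ht, hy⟩ => hy ▸ hM₀ t (hsub ht)⟩
  have hM : ∀ t ∈ Icc (0:ℝ) 1, |f'' t| ≤ M :=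
    fun t ht => le_csSup hbdd ⟨t, ht, rfl⟩
  have hM0 : 0 ≤ M := le_trans (abs_nonneg _) (hM 0 ⟨le_rfl, by norm_num⟩)
  -- bound |A|
  have habs : ∀ (a b : ℝ) (g : ℝ → ℝ), a ≤ b → uIcc a b ⊆ Icc (0:ℝ) 1 →
      Continuous g → IntervalIntegrable f'' volume a b →
      |∫ x in a..b, g x * f'' x| ≤ ∫ x in a..b, |g x| * M := by
    intro a b g hab hsub2 hg hintg
    calc |∫ x in a..b, g x * f'' x| ≤ ∫ x in a..b, |g x * f'' x| :=
          intervalIntegral.abs_integral_le_integral_abs hab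
      _ ≤ ∫ x in a..b, |g x| * M := by
          apply intervalIntegral.integral_mono_on hab
          · have : IntervalIntegrable (fun x => |g x| * |f'' x|) volume a b :=
              hintg.abs.continuousOn_mul (hg.abs.continuousOn)
            simpa [abs_mul] using this
          · exact (hg.abs.mul continuous_const).continuousOn.intervalIntegrable
          · intro x hx
            rw [abs_mul]
            exact mul_le_mul_of_nonneg_left (hM x (hsub2 (by rwa [uIcc_of_le hab]))) (abs_nonneg _)
  have hc1 : Continuous (fun x : ℝ => x^2/2 - s/8*x) :=
    ((continuous_pow 2).div_const 2).sub (continuous_const.mul continuous_id)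
  have hc2 : Continuous (fun x : ℝ => (1-x)^2/2 - s/8*(1-x)) := by
    have h0 : Continuous (fun x : ℝ => 1 - x) := continuous_const.sub continuous_id
    exact ((h0.pow 2).div_const 2).sub (continuous_const.mul h0)
  have hAbd := habs 0 (1/2) (fun x => x^2/2 - s/8*x) (by norm_num) h01 hc1 hint01
  have hBbd := habs (1/2) 1 (fun x => (1-x)^2/2 - s/8*(1-x)) (by norm_num) h12 hc2 hint12
  -- compute ∫ |g1| on [0,1/2]
  have poly : ∀ (a b : ℝ), (∫ x in a..b, (x^2/2 - s/8*x))
      = (b^3/6 - s/16*b^2) - (a^3/6 - s/16*a^2) := by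
    intro a b
    apply intervalIntegral.integral_eq_sub_of_hasDerivAt
    · intro x hx
      have h1 := (((hasDerivAt_pow 3 x).div_const 6).sub
        (((hasDerivAt_pow 2 x)).const_mul (s/16)))
      exact h1.congr_deriv (by push_cast; ring)
    · exact hc1.intervalIntegrable a b
  have hsign1 : ∀ x ∈ uIcc (0:ℝ) (s/4), |x^2/2 - s/8*x| = -(x^2/2 - s/8*x) := by
    intro x hx
    rw [uIcc_of_le (by linarith)] at hx
    apply abs_of_nonpos
    nlinarith [hx.1, hx.2]
  have hsign2 : ∀ x ∈ uIcc (s/4) (1/2:ℝ), |x^2/2 - s/8*x| = x^2/2 - s/8*x := by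
    intro x hx
    rw [uIcc_of_le (by nlinarith)] at hx
    apply abs_of_nonneg
    nlinarith [hx.1, hx.2]
  have hJ1 : (∫ x in (0:ℝ)..(1/2), |x^2/2 - s/8*x|) = (2 - s)/96 := by
    have hadj : (∫ x in (0:ℝ)..(s/4), |x^2/2 - s/8*x|)
        + (∫ x in (s/4:ℝ)..(1/2), |x^2/2 - s/8*x|)
        = ∫ x in (0:ℝ)..(1/2), |x^2/2 - s/8*x| := by
      apply intervalIntegral.integral_add_adjacent_intervals <;>
        exact (hc1.abs.intervalIntegrable _ _)
    rw [← hadj, intervalIntegral.integral_congr hsign1, intervalIntegral.integral_congr hsign2,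
      intervalIntegral.integral_neg, poly, poly]
    linear_combination (s/384) * s2
  -- transfer to [1/2,1] by symmetry
  have hJ2 : (∫ x in (1/2:ℝ)..1, |(1-x)^2/2 - s/8*(1-x)|) = (2 - s)/96 := by
    have := intervalIntegral.integral_comp_sub_left (a := (1/2:ℝ)) (b := 1)
      (fun y => |y^2/2 - s/8*y|) 1
    norm_num at this
    rw [this, hJ1]
  -- finish
  have e1 : (∫ x in (0:ℝ)..(1/2), |x^2/2 - s/8*x| * M) = (2 - s)/96 * M := by
    rw [intervalIntegral.integral_mul_const, hJ1]
  have e2 : (∫ x in (1/2:ℝ)..1, |(1-x)^2/2 - s/8*(1-x)| * M) = (2 - s)/96 * M := by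
    rw [intervalIntegral.integral_mul_const, hJ2]
  rw [e1] at hAbd
  rw [e2] at hBbd
  calc |A + B| ≤ |A| + |B| := abs_add_le A B
    _ ≤ (2 - s)/96 * M + (2 - s)/96 * M := add_le_add hAbd hBbd
    _ = (2 - s)/48 * M := by ring
end

section
/- If f is twice differentiable on an open interval containing [0,1] with f'' bounded and integrable, then the Simpson rule error satisfies |∫₀¹ f(t) dt - (1/6) f(0) - (2/3) f(1/2) - (1/6) f(1)| ≤ (1/81) · sup_{t ∈ [0,1]} |f''(t)|. -/
open MeasureTheory Real Set

/-!
Two integrations by parts on each half of `[0, 1]` express the Simpson error as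
`∫ K f''`, where the Peano kernel `K` is `t ^ 2 / 2 - t / 6` on `[0, 1/2]` and its mirror image
`K (1 - t)` on `[1/2, 1]`. Hence the error is at most `sup |f''| * ∫₀¹ |K|`, and
`∫₀¹ |K| = 2 * ∫₀^{1/2} |t ^ 2 / 2 - t / 6| dt = 1/81`.
-/

noncomputable def simpsonHalfKernel (t : ℝ) : ℝ := t ^ 2 / 2 - t / 6

theorem hasDerivAt_simpsonHalfKernel (t : ℝ) : HasDerivAt simpsonHalfKernel (t - 1 / 6) t := by
  have := ((hasDerivAt_pow 2 t).div_const 2).sub ((hasDerivAt_id t).div_const 6)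
  exact this.congr_deriv (by simp)

theorem integral_abs_simpsonHalfKernel :
    ∫ t in (0 : ℝ)..1 / 2, |simpsonHalfKernel t| = 1 / 162 := by
  have hprim : ∀ t, HasDerivAt (fun t : ℝ => t ^ 3 / 6 - t ^ 2 / 12) (simpsonHalfKernel t) t := by
    intro t
    have := ((hasDerivAt_pow 3 t).div_const 6).sub ((hasDerivAt_pow 2 t).div_const 12)
    exact this.congr_deriv (by simp [simpsonHalfKernel]; ring)
  have hcont : Continuous simpsonHalfKernel := by unfold simpsonHalfKernel; fun_prop
  -- `simpsonHalfKernel t = t * (3 * t - 1) / 6` changes sign at `1/3`.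
  have hneg : ∫ t in (0 : ℝ)..1 / 3, |simpsonHalfKernel t|
      = ∫ t in (0 : ℝ)..1 / 3, -simpsonHalfKernel t := by
    refine intervalIntegral.integral_congr fun t ht => abs_of_nonpos ?_
    rw [uIcc_of_le (by norm_num)] at ht
    unfold simpsonHalfKernel; nlinarith [ht.1, ht.2]
  have hpos : ∫ t in (1 / 3 : ℝ)..1 / 2, |simpsonHalfKernel t|
      = ∫ t in (1 / 3 : ℝ)..1 / 2, simpsonHalfKernel t := by
    refine intervalIntegral.integral_congr fun t ht => abs_of_nonneg ?_
    rw [uIcc_of_le (by norm_num)] at ht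
    unfold simpsonHalfKernel; nlinarith [ht.1, ht.2]
  rw [← intervalIntegral.integral_add_adjacent_intervals (b := 1 / 3)
      (hcont.abs.intervalIntegrable _ _) (hcont.abs.intervalIntegrable _ _),
    hneg, hpos, intervalIntegral.integral_neg,
    intervalIntegral.integral_eq_sub_of_hasDerivAt (fun t _ => hprim t)
      (hcont.intervalIntegrable _ _),
    intervalIntegral.integral_eq_sub_of_hasDerivAt (fun t _ => hprim t)
      (hcont.intervalIntegrable _ _)]
  norm_num

theorem integral_mul_second_deriv_eq {a b : ℝ} {u u' f f' f'' : ℝ → ℝ}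
    (hu : ∀ x ∈ uIcc a b, HasDerivAt u (u' x) x) (hu' : ∀ x ∈ uIcc a b, HasDerivAt u' 1 x)
    (hf : ∀ x ∈ uIcc a b, HasDerivAt f (f' x) x) (hf' : ∀ x ∈ uIcc a b, HasDerivAt f' (f'' x) x)
    (hf'' : IntervalIntegrable f'' volume a b) :
    ∫ x in a..b, u x * f'' x
      = u b * f' b - u a * f' a - (u' b * f b - u' a * f a) + ∫ x in a..b, f x := by
  have hu'_int : IntervalIntegrable u' volume a b :=
    ContinuousOn.intervalIntegrable fun x hx => (hu' x hx).continuousAt.continuousWithinAt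
  have hf'_int : IntervalIntegrable f' volume a b :=
    ContinuousOn.intervalIntegrable fun x hx => (hf' x hx).continuousAt.continuousWithinAt
  rw [intervalIntegral.integral_mul_deriv_eq_deriv_mul hu hf' hu'_int hf'',
    intervalIntegral.integral_mul_deriv_eq_deriv_mul hu' hf intervalIntegrable_const hf'_int]
  simp only [one_mul]
  ring

theorem abs_integral_mul_le_of_abs_le {K g : ℝ → ℝ} {a b M : ℝ} (hab : a ≤ b)
    (hK : ContinuousOn K (Icc a b)) (hg : ∀ t ∈ Ioc a b, |g t| ≤ M) :
    |∫ t in a..b, K t * g t| ≤ M * ∫ t in a..b, |K t| := by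
  rw [← Real.norm_eq_abs, ← intervalIntegral.integral_const_mul M fun t => |K t|]
  refine intervalIntegral.norm_integral_le_of_norm_le hab (ae_of_all _ fun t ht => ?_)
    ((continuousOn_const.mul hK.abs).intervalIntegrable_of_Icc hab)
  rw [Real.norm_eq_abs, abs_mul, mul_comm M]
  exact mul_le_mul_of_nonneg_left (hg t ht) (abs_nonneg _)

theorem simpson_error_eq_integral_kernel {f f' f'' : ℝ → ℝ}
    (hf : ∀ t ∈ Icc (0 : ℝ) 1, HasDerivAt f (f' t) t)
    (hf' : ∀ t ∈ Icc (0 : ℝ) 1, HasDerivAt f' (f'' t) t)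
    (hf'' : IntervalIntegrable f'' volume 0 1) :
    (∫ t in (0 : ℝ)..1, f t) - (1 / 6) * f 0 - (2 / 3) * f (1 / 2) - (1 / 6) * f 1
      = (∫ t in (0 : ℝ)..1 / 2, simpsonHalfKernel t * f'' t)
        + ∫ t in (1 / 2 : ℝ)..1, simpsonHalfKernel (1 - t) * f'' t := by
  rw [← uIcc_of_le zero_le_one] at hf hf'
  have hleft : uIcc (0 : ℝ) (1 / 2) ⊆ uIcc 0 1 := uIcc_subset_uIcc (by simp) (by norm_num)
  have hright : uIcc (1 / 2 : ℝ) 1 ⊆ uIcc 0 1 := uIcc_subset_uIcc (by norm_num) (by simp)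
  have hf_int : ∀ {a b : ℝ}, uIcc a b ⊆ uIcc 0 1 → IntervalIntegrable f volume a b :=
    fun hab => ContinuousOn.intervalIntegrable fun t ht =>
      (hf t (hab ht)).continuousAt.continuousWithinAt
  have hlin : ∀ c t : ℝ, HasDerivAt (fun t => t - c) 1 t := fun c t =>
    (hasDerivAt_id t).sub_const c
  have hmirror : ∀ t, HasDerivAt (fun t => simpsonHalfKernel (1 - t)) (t - 5 / 6) t := fun t =>
    ((hasDerivAt_simpsonHalfKernel (1 - t)).comp t ((hasDerivAt_id t).const_sub 1)).congr_deriv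
      (by simp; ring)
  rw [integral_mul_second_deriv_eq (fun t _ => hasDerivAt_simpsonHalfKernel t)
      (fun t _ => hlin _ t)
      (fun t ht => hf t (hleft ht)) (fun t ht => hf' t (hleft ht)) (hf''.mono_set hleft),
    integral_mul_second_deriv_eq (fun t _ => hmirror t) (fun t _ => hlin _ t)
      (fun t ht => hf t (hright ht)) (fun t ht => hf' t (hright ht)) (hf''.mono_set hright),
    ← intervalIntegral.integral_add_adjacent_intervals (hf_int hleft) (hf_int hright)]
  norm_num [simpsonHalfKernel]
  ring

theorem abs_simpson_error_le {f f' f'' : ℝ → ℝ} {M : ℝ}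
    (hf : ∀ t ∈ Icc (0 : ℝ) 1, HasDerivAt f (f' t) t)
    (hf' : ∀ t ∈ Icc (0 : ℝ) 1, HasDerivAt f' (f'' t) t)
    (hf'' : IntervalIntegrable f'' volume 0 1) (hM : ∀ t ∈ Icc (0 : ℝ) 1, |f'' t| ≤ M) :
    |(∫ t in (0 : ℝ)..1, f t) - (1 / 6) * f 0 - (2 / 3) * f (1 / 2) - (1 / 6) * f 1|
      ≤ (1 / 81) * M := by
  rw [simpson_error_eq_integral_kernel hf hf' hf'']
  have hK : Continuous simpsonHalfKernel := by unfold simpsonHalfKernel; fun_prop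
  have hleft := abs_integral_mul_le_of_abs_le (by norm_num : (0 : ℝ) ≤ 1 / 2) hK.continuousOn
    fun t ht => hM t (Icc_subset_Icc le_rfl (by norm_num) (Ioc_subset_Icc_self ht))
  have hright := abs_integral_mul_le_of_abs_le (by norm_num : (1 / 2 : ℝ) ≤ 1)
    (K := fun t => simpsonHalfKernel (1 - t)) (by fun_prop : Continuous _).continuousOn
    fun t ht => hM t (Icc_subset_Icc (by norm_num) le_rfl (Ioc_subset_Icc_self ht))
  have hmirror : ∫ t in (1 / 2 : ℝ)..1, |simpsonHalfKernel (1 - t)| = 1 / 162 := by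
    rw [intervalIntegral.integral_comp_sub_left (fun t => |simpsonHalfKernel t|)]
    norm_num [integral_abs_simpsonHalfKernel]
  rw [integral_abs_simpsonHalfKernel] at hleft
  rw [hmirror] at hright
  calc _ ≤ _ := abs_add_le _ _
    _ ≤ M * (1 / 162) + M * (1 / 162) := add_le_add hleft hright
    _ = (1 / 81) * M := by ring

theorem stmt_5 (f f' f'' : ℝ → ℝ) (c d : ℝ)
    (hsub : Icc (0:ℝ) 1 ⊆ Ioo c d)
    (hd1 : ∀ t ∈ Ioo c d, HasDerivAt f (f' t) t)
    (hd2 : ∀ t ∈ Ioo c d, HasDerivAt f' (f'' t) t)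
    (hbd : ∃ M, ∀ t ∈ Ioo c d, |f'' t| ≤ M)
    (hint : IntervalIntegrable f'' volume 0 1) :
    |(∫ t in (0:ℝ)..1, f t) - (1/6) * f 0
        - (2/3) * f (1/2) - (1/6) * f 1|
      ≤ (1/81) * sSup ((fun t => |f'' t|) '' Icc (0:ℝ) 1) := by
  obtain ⟨B, hB⟩ := hbd
  have hbdd : BddAbove ((fun t => |f'' t|) '' Icc (0:ℝ) 1) :=
    ⟨B, forall_mem_image.2 fun t ht => hB t (hsub ht)⟩
  exact abs_simpson_error_le (fun t ht => hd1 t (hsub ht)) (fun t ht => hd2 t (hsub ht)) hint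
    fun t ht => le_csSup hbdd (mem_image_of_mem _ ht)
end

section
/- If f is twice differentiable on an open interval containing [a,b] with f'' bounded and integrable, then |∫_a^b f(t) dt - [(√2/8) f(a) + (1 - √2/4) f((a+b)/2) + (√2/8) f(b)](b-a)| ≤ ((2 - √2)/48) · sup_{t ∈ [a,b]} |f''(t)| · (b-a)³. -/
/-!
Let `K t = s² / 2 - w s`, where `s` is the distance from `t` to the nearer endpoint of `[a, b]`.
Integrating by parts twice on each half of `[a, b]` turns the error of the rule with end weights
`w` and midpoint weight `(b - a) - 2w` into `∫ K f''`, so the error is at most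
`sup |f''| · ∫ |K|`. The kernel changes sign at `s = 2w`, and for `w = √2 (b - a) / 8` each half
of `[a, b]` contributes `(2 - √2) (b - a)³ / 96` to `∫ |K|`.
-/

open MeasureTheory Real Set

namespace intervalIntegral

theorem integral_mul_deriv_deriv_eq {f f' f'' K k : ℝ → ℝ} {x y : ℝ}
    (hf : ∀ t ∈ uIcc x y, HasDerivAt f (f' t) t)
    (hf' : ∀ t ∈ uIcc x y, HasDerivAt f' (f'' t) t)
    (hK : ∀ t ∈ uIcc x y, HasDerivAt K (k t) t) (hk : ∀ t ∈ uIcc x y, HasDerivAt k 1 t)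
    (hf'' : IntervalIntegrable f'' volume x y) :
    ∫ t in x..y, K t * f'' t
      = K y * f' y - K x * f' x - (k y * f y - k x * f x) + ∫ t in x..y, f t := by
  have hKf'' : IntervalIntegrable (fun t => K t * f'' t) volume x y :=
    hf''.continuousOn_mul fun t ht => (hK t ht).continuousAt.continuousWithinAt
  have hfi : IntervalIntegrable f volume x y :=
    ContinuousOn.intervalIntegrable fun t ht => (hf t ht).continuousAt.continuousWithinAt
  have hFTC : ∫ t in x..y, (K t * f'' t - f t)
      = K y * f' y - k y * f y - (K x * f' x - k x * f x) :=
    integral_eq_sub_of_hasDerivAt (f := fun t => K t * f' t - k t * f t)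
      (fun t ht =>
        (((hK t ht).mul (hf' t ht)).sub ((hk t ht).mul (hf t ht))).congr_deriv (by ring))
      (hKf''.sub hfi)
  rw [integral_sub hKf'' hfi] at hFTC
  linarith

theorem abs_integral_mul_le_of_abs_le {K g : ℝ → ℝ} {x y M : ℝ} (hxy : x ≤ y)
    (hK : ContinuousOn K (uIcc x y)) (hM : ∀ t ∈ Icc x y, |g t| ≤ M) :
    |∫ t in x..y, K t * g t| ≤ M * ∫ t in x..y, |K t| := by
  rw [← integral_const_mul, ← Real.norm_eq_abs]
  refine norm_integral_le_of_norm_le hxy (Filter.Eventually.of_forall fun t ht => ?_)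
    ((hK.abs.intervalIntegrable (μ := volume)).const_mul M)
  rw [Real.norm_eq_abs, abs_mul, mul_comm M]
  exact mul_le_mul_of_nonneg_left (hM t (Ioc_subset_Icc_self ht)) (abs_nonneg _)

end intervalIntegral

open intervalIntegral

noncomputable def peanoKernel (w s : ℝ) : ℝ := s ^ 2 / 2 - w * s

namespace peanoKernel

theorem hasDerivAt (w s : ℝ) : HasDerivAt (peanoKernel w) (s - w) s := by
  have := ((hasDerivAt_pow 2 s).div_const 2).sub ((hasDerivAt_id s).const_mul w)
  exact this.congr_deriv (by simp)

theorem continuous (w : ℝ) : Continuous (peanoKernel w) := by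
  unfold peanoKernel; fun_prop

theorem integral (w x y : ℝ) :
    ∫ s in x..y, peanoKernel w s = (y ^ 3 - x ^ 3) / 6 - w * (y ^ 2 - x ^ 2) / 2 := by
  rw [integral_eq_sub_of_hasDerivAt (f := fun s => s ^ 3 / 6 - w * s ^ 2 / 2)
    (fun s _ => ?_) ((continuous w).intervalIntegrable x y)]
  · ring
  · have := ((hasDerivAt_pow 3 s).div_const 6).sub
      (((hasDerivAt_pow 2 s).const_mul w).div_const 2)
    exact this.congr_deriv (by simp [peanoKernel]; ring)

theorem integral_abs {w h : ℝ} (hw : 0 ≤ w) (hwh : 2 * w ≤ h) :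
    ∫ s in (0 : ℝ)..h, |peanoKernel w s| = h ^ 3 / 6 - w * h ^ 2 / 2 + 4 * w ^ 3 / 3 := by
  have hfactor : ∀ s, peanoKernel w s = s * (s - 2 * w) / 2 := fun s => by
    unfold peanoKernel; ring
  have hneg : ∫ s in (0 : ℝ)..2 * w, |peanoKernel w s|
      = ∫ s in (0 : ℝ)..2 * w, -peanoKernel w s := by
    refine integral_congr fun s hs => abs_of_nonpos ?_
    rw [uIcc_of_le (by linarith)] at hs
    rw [hfactor]
    exact div_nonpos_of_nonpos_of_nonneg
      (mul_nonpos_of_nonneg_of_nonpos hs.1 (by linarith [hs.2])) zero_le_two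
  have hpos : ∫ s in 2 * w..h, |peanoKernel w s| = ∫ s in 2 * w..h, peanoKernel w s := by
    refine integral_congr fun s hs => abs_of_nonneg ?_
    rw [uIcc_of_le hwh] at hs
    rw [hfactor]
    exact div_nonneg (mul_nonneg (by linarith [hs.1]) (by linarith [hs.1])) zero_le_two
  rw [← integral_add_adjacent_intervals (b := 2 * w) ((continuous w).abs.intervalIntegrable _ _)
    ((continuous w).abs.intervalIntegrable _ _), hneg, hpos, intervalIntegral.integral_neg,
    peanoKernel.integral, peanoKernel.integral]
  ring

theorem integral_abs_sqrt_two {L : ℝ} (hL : 0 ≤ L) :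
    ∫ s in (0 : ℝ)..L / 2, |peanoKernel (√2 * L / 8) s| = (2 - √2) / 96 * L ^ 3 := by
  have hsq : √2 ^ 2 = 2 := sq_sqrt zero_le_two
  have hle : √2 ≤ 2 := by nlinarith [sqrt_nonneg 2]
  rw [integral_abs (by positivity) (by nlinarith)]
  linear_combination (√2 * L ^ 3 / 384) * hsq

end peanoKernel

theorem integral_sub_quadrature_eq {f f' f'' : ℝ → ℝ} {a b : ℝ} (w : ℝ) (hab : a ≤ b)
    (hf : ∀ t ∈ Icc a b, HasDerivAt f (f' t) t)
    (hf' : ∀ t ∈ Icc a b, HasDerivAt f' (f'' t) t)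
    (hf'' : IntervalIntegrable f'' volume a b) :
    (∫ t in a..b, f t) - (w * f a + ((b - a) - 2 * w) * f ((a + b) / 2) + w * f b)
      = (∫ t in a..(a + b) / 2, peanoKernel w (t - a) * f'' t)
        + ∫ t in (a + b) / 2..b, peanoKernel w (b - t) * f'' t := by
  set m := (a + b) / 2 with hm
  rw [← uIcc_of_le hab] at hf hf'
  have hmem : m ∈ uIcc a b := Icc_subset_uIcc ⟨by linarith, by linarith⟩
  have hleft : uIcc a m ⊆ uIcc a b := uIcc_subset_uIcc left_mem_uIcc hmem
  have hright : uIcc m b ⊆ uIcc a b := uIcc_subset_uIcc hmem right_mem_uIcc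
  have e1 := integral_mul_deriv_deriv_eq (K := fun t => peanoKernel w (t - a))
    (k := fun t => t - a - w) (fun t ht => hf t (hleft ht)) (fun t ht => hf' t (hleft ht))
    (fun t _ => ((peanoKernel.hasDerivAt w (t - a)).comp_sub_const t a).congr_deriv (by ring))
    (fun t _ => ((hasDerivAt_id t).sub_const a).sub_const w) (hf''.mono_set hleft)
  have e2 := integral_mul_deriv_deriv_eq (K := fun t => peanoKernel w (b - t))
    (k := fun t => w - (b - t)) (fun t ht => hf t (hright ht)) (fun t ht => hf' t (hright ht))
    (fun t _ => ((peanoKernel.hasDerivAt w (b - t)).comp_const_sub b t).congr_deriv (by ring))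
    (fun t _ => by simpa using ((hasDerivAt_id t).const_sub b).const_sub w)
    (hf''.mono_set hright)
  have hfi : IntervalIntegrable f volume a b :=
    ContinuousOn.intervalIntegrable fun t ht => (hf t ht).continuousAt.continuousWithinAt
  rw [← integral_add_adjacent_intervals (hfi.mono_set hleft) (hfi.mono_set hright), e1, e2]
  simp only [peanoKernel, hm]
  ring

theorem abs_integral_sub_quadrature_le {f f' f'' : ℝ → ℝ} {a b M : ℝ} (w : ℝ)
    (hab : a ≤ b)
    (hf : ∀ t ∈ Icc a b, HasDerivAt f (f' t) t)
    (hf' : ∀ t ∈ Icc a b, HasDerivAt f' (f'' t) t)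
    (hf'' : IntervalIntegrable f'' volume a b) (hM : ∀ t ∈ Icc a b, |f'' t| ≤ M) :
    |(∫ t in a..b, f t) - (w * f a + ((b - a) - 2 * w) * f ((a + b) / 2) + w * f b)|
      ≤ 2 * M * ∫ s in (0 : ℝ)..(b - a) / 2, |peanoKernel w s| := by
  have hleft : |∫ t in a..(a + b) / 2, peanoKernel w (t - a) * f'' t|
      ≤ M * ∫ s in (0 : ℝ)..(b - a) / 2, |peanoKernel w s| := by
    have := abs_integral_mul_le_of_abs_le (K := fun t => peanoKernel w (t - a))
      (y := (a + b) / 2) (by linarith)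
      ((peanoKernel.continuous w).comp (continuous_sub_right a)).continuousOn
      (fun t ht => hM t ⟨ht.1, by linarith [ht.2]⟩)
    rwa [integral_comp_sub_right (fun s => |peanoKernel w s|), sub_self,
      show (a + b) / 2 - a = (b - a) / 2 by ring] at this
  have hright : |∫ t in (a + b) / 2..b, peanoKernel w (b - t) * f'' t|
      ≤ M * ∫ s in (0 : ℝ)..(b - a) / 2, |peanoKernel w s| := by
    have := abs_integral_mul_le_of_abs_le (K := fun t => peanoKernel w (b - t))
      (x := (a + b) / 2) (by linarith)
      ((peanoKernel.continuous w).comp (continuous_sub_left b)).continuousOn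
      (fun t ht => hM t ⟨by linarith [ht.1], ht.2⟩)
    rwa [integral_comp_sub_left (fun s => |peanoKernel w s|), sub_self,
      show b - (a + b) / 2 = (b - a) / 2 by ring] at this
  rw [integral_sub_quadrature_eq w hab hf hf' hf'']
  calc _ ≤ _ := abs_add_le _ _
    _ ≤ _ := add_le_add hleft hright
    _ = _ := by ring

theorem stmt_6 (f f' f'' : ℝ → ℝ) (a b c d : ℝ) (hab : a < b)
    (hsub : Icc a b ⊆ Ioo c d)
    (hd1 : ∀ t ∈ Ioo c d, HasDerivAt f (f' t) t)
    (hd2 : ∀ t ∈ Ioo c d, HasDerivAt f' (f'' t) t)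
    (hbd : ∃ M, ∀ t ∈ Ioo c d, |f'' t| ≤ M)
    (hint : IntervalIntegrable f'' volume a b) :
    |(∫ t in a..b, f t)
        - (Real.sqrt 2 / 8 * f a + (1 - Real.sqrt 2 / 4) * f ((a + b) / 2)
            + Real.sqrt 2 / 8 * f b) * (b - a)|
      ≤ (2 - Real.sqrt 2) / 48 * sSup ((fun t => |f'' t|) '' Icc a b) * (b - a)^3 := by
  obtain ⟨M₀, hM₀⟩ := hbd
  have hM : ∀ t ∈ Icc a b, |f'' t| ≤ sSup ((fun t => |f'' t|) '' Icc a b) := fun t ht =>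
    le_csSup ⟨M₀, by rintro _ ⟨s, hs, rfl⟩; exact hM₀ s (hsub hs)⟩ ⟨t, ht, rfl⟩
  have hrule : (√2 / 8 * f a + (1 - √2 / 4) * f ((a + b) / 2) + √2 / 8 * f b) * (b - a)
      = √2 * (b - a) / 8 * f a + ((b - a) - 2 * (√2 * (b - a) / 8)) * f ((a + b) / 2)
        + √2 * (b - a) / 8 * f b := by
    ring
  have hbound := abs_integral_sub_quadrature_le (√2 * (b - a) / 8) hab.le
    (fun t ht => hd1 t (hsub ht)) (fun t ht => hd2 t (hsub ht)) hint hM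
  rw [peanoKernel.integral_abs_sqrt_two (sub_nonneg.mpr hab.le)] at hbound
  rw [hrule]
  exact hbound.trans_eq (by ring)
end

section
/- If f : [0,1] → ℝ is absolutely continuous, f' ∈ L¹(0,1), and there exist γ₁, Γ₁ with γ₁ ≤ f'(t) ≤ Γ₁ for all t ∈ [0,1], then |Q(f)| ≤ ((Γ₁ - γ₁)/32)(5 - 2√2), where Q(f) = ∫₀¹ f(t) dt - (√2/8) f(0) - (1 - √2/4) f(1/2) - (√2/8) f(1). -/
/-!
Writing `f t = f a + ∫ₐᵗ f'`, integration by parts turns the error of the two-point rule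
`(c - a) f a + (b - c) f b` for `∫ₐᵇ f` into `∫ₐᵇ (c - s) f' s ds`. The quadrature is the sum of
two such rules, on `[0, 1/2]` with `c = √2/8` and on `[1/2, 1]` with `c = 1 - √2/8`, so its Peano
kernel `K` is piecewise affine. The rule is exact on affine functions, i.e. `∫₀¹ K = 0`, so `f'`
may be replaced by `f' - (γ₁ + Γ₁)/2`, which is bounded by `(Γ₁ - γ₁)/2`; it remains to compute
`∫₀¹ |K| = c² + (1/2 - c)²`.
-/

open MeasureTheory Real Set intervalIntegral

theorem integral_const_sub_id (a b c : ℝ) : ∫ s in a..b, (c - s) = (b - a) * (c - (a + b) / 2) := by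
  rw [intervalIntegral.integral_sub intervalIntegrable_const intervalIntegrable_id]
  simp only [intervalIntegral.integral_const, smul_eq_mul, integral_id]
  ring

theorem integral_abs_const_sub {a b c : ℝ} (hac : a ≤ c) (hcb : c ≤ b) :
    ∫ s in a..b, |c - s| = ((c - a) ^ 2 + (b - c) ^ 2) / 2 := by
  have hcont : Continuous fun s : ℝ => |c - s| := by fun_prop
  rw [← integral_add_adjacent_intervals (b := c) (hcont.intervalIntegrable _ _)
    (hcont.intervalIntegrable _ _)]
  have hleft : EqOn (fun s => |c - s|) (fun s => c - s) (uIcc a c) := by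
    intro s hs
    rw [uIcc_of_le hac] at hs
    exact abs_of_nonneg (sub_nonneg.2 hs.2)
  have hright : EqOn (fun s => |c - s|) (fun s => -(c - s)) (uIcc c b) := by
    intro s hs
    rw [uIcc_of_le hcb] at hs
    exact abs_of_nonpos (sub_nonpos.2 hs.1)
  rw [integral_congr hleft, integral_congr hright, intervalIntegral.integral_neg,
    integral_const_sub_id, integral_const_sub_id]
  ring

theorem integral_primitive_eq {g : ℝ → ℝ} {a b : ℝ} (hg : IntervalIntegrable g volume a b)
    (c : ℝ) :
    ∫ t in a..b, ∫ s in a..t, g s = (b - c) * (∫ s in a..b, g s) + ∫ s in a..b, (c - s) * g s := by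
  have hG := hg.absolutelyContinuousOnInterval_intervalIntegral left_mem_uIcc
  have hK : AbsolutelyContinuousOnInterval (fun s : ℝ => c - s) a b :=
    (contDiff_const.sub contDiff_id).contDiffOn.absolutelyContinuousOnInterval
  have hderiv : ∫ s in a..b, (c - s) * deriv (fun t => ∫ s in a..t, g s) s
      = ∫ s in a..b, (c - s) * g s := by
    refine integral_congr_ae ?_
    filter_upwards [hg.ae_hasDerivAt_integral] with s hs hsab
    rw [(hs (uIoc_subset_uIcc hsab) a left_mem_uIcc).deriv]
  have hparts : ∫ s in a..b, (c - s) * g s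
      = (c - b) * (∫ s in a..b, g s) + ∫ t in a..b, ∫ s in a..t, g s := by
    simpa [hderiv] using hK.integral_mul_deriv_eq_deriv_mul hG
  linarith

section Primitive

variable {f g : ℝ → ℝ} {a b : ℝ}

theorem continuousOn_of_eq_add_integral (hab : a ≤ b)
    (hf : ∀ t ∈ Icc a b, f t = f a + ∫ s in a..t, g s) (hg : IntervalIntegrable g volume a b) :
    ContinuousOn f (Icc a b) := by
  have hG := (hg.absolutelyContinuousOnInterval_intervalIntegral left_mem_uIcc).continuousOn
  rw [uIcc_of_le hab] at hG
  exact (continuousOn_const.add hG).congr hf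

theorem eq_add_integral_of_le (hf : ∀ t ∈ Icc a b, f t = f a + ∫ s in a..t, g s)
    (hg : IntervalIntegrable g volume a b) {c : ℝ} (hc : c ∈ Icc a b) :
    ∀ t ∈ Icc c b, f t = f c + ∫ s in c..t, g s := by
  intro t ht
  have hsub {x : ℝ} (hx : x ∈ Icc a b) : IntervalIntegrable g volume a x :=
    hg.mono_set (uIcc_subset_uIcc_left (Icc_subset_uIcc hx))
  have ht' : t ∈ Icc a b := ⟨hc.1.trans ht.1, ht.2⟩
  rw [hf t ht', hf c hc, ← integral_interval_sub_left (hsub ht') (hsub hc)]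
  ring

theorem integral_sub_two_point_eq (hab : a ≤ b)
    (hf : ∀ t ∈ Icc a b, f t = f a + ∫ s in a..t, g s) (hg : IntervalIntegrable g volume a b)
    (c : ℝ) :
    (∫ t in a..b, f t) - (c - a) * f a - (b - c) * f b = ∫ s in a..b, (c - s) * g s := by
  have hG := (hg.absolutelyContinuousOnInterval_intervalIntegral left_mem_uIcc).continuousOn
  have hf' : EqOn f (fun t => f a + ∫ s in a..t, g s) (uIcc a b) := by
    intro t ht
    rw [uIcc_of_le hab] at ht
    exact hf t ht
  rw [integral_congr hf', intervalIntegral.integral_add intervalIntegrable_const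
    hG.intervalIntegrable, hf b ⟨hab, le_rfl⟩, integral_primitive_eq hg c]
  simp only [intervalIntegral.integral_const, smul_eq_mul]
  ring

end Primitive

theorem abs_integral_mul_sub_le {K g : ℝ → ℝ} {a b m M : ℝ} (hab : a ≤ b)
    (hK : ContinuousOn K (uIcc a b)) (hg : IntervalIntegrable g volume a b)
    (hgm : ∀ t ∈ Icc a b, |g t - m| ≤ M) :
    |(∫ t in a..b, K t * g t) - m * ∫ t in a..b, K t| ≤ M * ∫ t in a..b, |K t| := by
  have hKi := hK.intervalIntegrable (μ := volume)
  have hlin : (∫ t in a..b, K t * g t) - m * ∫ t in a..b, K t = ∫ t in a..b, K t * (g t - m) := by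
    rw [← intervalIntegral.integral_const_mul, ← intervalIntegral.integral_sub
      (hg.continuousOn_mul hK) (hKi.const_mul m)]
    congr 1 with t
    ring
  rw [hlin, mul_comm, ← intervalIntegral.integral_mul_const, ← Real.norm_eq_abs]
  refine norm_integral_le_of_norm_le hab (ae_of_all _ fun t ht => ?_) (hKi.abs.mul_const M)
  rw [norm_mul, Real.norm_eq_abs, Real.norm_eq_abs]
  exact mul_le_mul_of_nonneg_left (hgm t ⟨ht.1.le, ht.2⟩) (abs_nonneg _)

theorem abs_composite_two_point_le {f g : ℝ → ℝ} {c m M : ℝ} (hc₀ : 0 ≤ c) (hc : c ≤ 1 / 2)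
    (hf : ∀ t ∈ Icc (0:ℝ) 1, f t = f 0 + ∫ s in (0:ℝ)..t, g s)
    (hg : IntervalIntegrable g volume 0 1) (hgm : ∀ t ∈ Icc (0:ℝ) 1, |g t - m| ≤ M) :
    |(∫ t in (0:ℝ)..1, f t) - c * f 0 - (1 - 2 * c) * f (1 / 2) - c * f 1|
      ≤ M * (c ^ 2 + (1 / 2 - c) ^ 2) := by
  have hmid : (1 / 2 : ℝ) ∈ Icc 0 1 := by norm_num
  have hleft := uIcc_subset_uIcc_left (Icc_subset_uIcc hmid)
  have hright := uIcc_subset_uIcc_right (Icc_subset_uIcc hmid)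
  have hg₁ := hg.mono_set hleft
  have hg₂ := hg.mono_set hright
  have hf₁ : ∀ t ∈ Icc (0:ℝ) (1 / 2), f t = f 0 + ∫ s in (0:ℝ)..t, g s :=
    fun t ht => hf t ⟨ht.1, ht.2.trans hmid.2⟩
  have hfi := (continuousOn_of_eq_add_integral zero_le_one hf hg).intervalIntegrable_of_Icc
    (μ := volume) zero_le_one
  have hsplit := integral_add_adjacent_intervals (hfi.mono_set hleft) (hfi.mono_set hright)
  have e₁ := integral_sub_two_point_eq hmid.1 hf₁ hg₁ c
  have e₂ := integral_sub_two_point_eq hmid.2 (eq_add_integral_of_le hf hg hmid) hg₂ (1 - c)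
  have b₁ := abs_integral_mul_sub_le (K := fun s => c - s) hmid.1 (by fun_prop) hg₁
    (fun t ht => hgm t ⟨ht.1, ht.2.trans hmid.2⟩)
  have b₂ := abs_integral_mul_sub_le (K := fun s => 1 - c - s) hmid.2 (by fun_prop) hg₂
    (fun t ht => hgm t ⟨hmid.1.trans ht.1, ht.2⟩)
  rw [integral_const_sub_id, integral_abs_const_sub hc₀ hc] at b₁
  rw [integral_const_sub_id, integral_abs_const_sub (by linarith) (by linarith)] at b₂
  rw [abs_le] at b₁ b₂ ⊢
  constructor <;> linarith

theorem stmt_7 (f f' : ℝ → ℝ) (γ₁ Γ₁ : ℝ)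
    (hac : ∀ t ∈ Icc (0:ℝ) 1, f t = f 0 + ∫ s in (0:ℝ)..t, f' s)
    (hint : IntervalIntegrable f' volume 0 1)
    (hbd : ∀ t ∈ Icc (0:ℝ) 1, γ₁ ≤ f' t ∧ f' t ≤ Γ₁) :
    |(∫ t in (0:ℝ)..1, f t) - Real.sqrt 2 / 8 * f 0
        - (1 - Real.sqrt 2 / 4) * f (1/2) - Real.sqrt 2 / 8 * f 1|
      ≤ (Γ₁ - γ₁) / 32 * (5 - 2 * Real.sqrt 2) := by
  have hsq : √2 ^ 2 = 2 := sq_sqrt zero_le_two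
  have hc : √2 / 8 ≤ 1 / 2 := by nlinarith [sqrt_nonneg 2]
  have hgm (t : ℝ) (ht : t ∈ Icc (0:ℝ) 1) : |f' t - (γ₁ + Γ₁) / 2| ≤ (Γ₁ - γ₁) / 2 := by
    rw [abs_le]
    constructor <;> linarith [hbd t ht]
  have h := abs_composite_two_point_le (by positivity) hc hac hint hgm
  calc _ = |(∫ t in (0:ℝ)..1, f t) - √2 / 8 * f 0 - (1 - 2 * (√2 / 8)) * f (1 / 2)
        - √2 / 8 * f 1| := by ring_nf
    _ ≤ _ := h
    _ = _ := by linear_combination (Γ₁ - γ₁) / 64 * hsq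
end

section
/- The L¹ norm of the kernel p₁, defined by p₁(t) = t - √2/8 for t ∈ [0,1/2] and p₁(t) = t - 1 + √2/8 for t ∈ (1/2,1], equals ∫₀¹ |p₁(t)| dt = 5/16 - √2/8, and its sup norm is sup_{t∈[0,1]} |p₁(t)| = 1/2 - √2/8. -/
open MeasureTheory Real Set intervalIntegral

/-!
With `c = √2/8`, the kernel is `t - c` on `[0, 1/2]` and `t - (1 - c)` on `(1/2, 1]`, so `|p₁|`
consists of two "V" shapes whose vertices lie at distance `c` and `1/2 - c` from the ends of their
half-interval. Each has area `(c² + (1/2 - c)²)/2`, and the total `c² + (1/2 - c)²` equals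
`5/16 - c` because `c² = 1/32`. As `c ≤ 1/4`, both are bounded by `1/2 - c`, the value at `t = 1/2`.
-/

lemma integral_abs_sub_const {a b c : ℝ} (hac : a ≤ c) (hcb : c ≤ b) :
    ∫ t in a..b, |t - c| = ((c - a) ^ 2 + (b - c) ^ 2) / 2 := by
  have hint (u v : ℝ) : IntervalIntegrable (fun t => |t - c|) volume u v :=
    (continuous_id.sub continuous_const).abs.intervalIntegrable u v
  have hleft : EqOn (fun t => |t - c|) (fun t => c - t) (uIcc a c) := fun t ht => by
    rw [uIcc_of_le hac] at ht
    simp only [abs_of_nonpos (sub_nonpos.2 ht.2), neg_sub]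
  have hright : EqOn (fun t => |t - c|) (fun t => t - c) (uIcc c b) := fun t ht => by
    rw [uIcc_of_le hcb] at ht
    simp only [abs_of_nonneg (sub_nonneg.2 ht.1)]
  rw [← integral_add_adjacent_intervals (hint a c) (hint c b), integral_congr hleft,
    integral_congr hright, integral_sub intervalIntegrable_const intervalIntegrable_id,
    integral_sub intervalIntegrable_id intervalIntegrable_const, integral_id, integral_id,
    intervalIntegral.integral_const, intervalIntegral.integral_const, smul_eq_mul, smul_eq_mul]
  ring

lemma integral_eq_add_of_eqOn_uIoo {f g₁ g₂ : ℝ → ℝ} {a m b : ℝ} (hg₁ : Continuous g₁)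
    (hg₂ : Continuous g₂) (h₁ : EqOn f g₁ (uIoo a m)) (h₂ : EqOn f g₂ (uIoo m b)) :
    ∫ t in a..b, f t = (∫ t in a..m, g₁ t) + ∫ t in m..b, g₂ t := by
  rw [← integral_add_adjacent_intervals ((intervalIntegrable_congr_uIoo h₁).2
      (hg₁.intervalIntegrable a m)) ((intervalIntegrable_congr_uIoo h₂).2
      (hg₂.intervalIntegrable m b)), integral_congr_uIoo h₁, integral_congr_uIoo h₂]

lemma sqrt_two_div_eight_sq : (√2 / 8) ^ 2 = 1 / 32 := by
  rw [div_pow, sq_sqrt zero_le_two]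
  norm_num

lemma sqrt_two_div_eight_le : √2 / 8 ≤ 1 / 4 := by
  have h : √2 ≤ 2 := by nlinarith [sq_sqrt (zero_le_two : (0 : ℝ) ≤ 2), sqrt_nonneg 2]
  linarith

theorem stmt_10 (p₁ : ℝ → ℝ)
    (h1 : ∀ t ∈ Icc (0:ℝ) (1/2), p₁ t = t - Real.sqrt 2 / 8)
    (h2 : ∀ t ∈ Ioc (1/2 : ℝ) 1, p₁ t = t - 1 + Real.sqrt 2 / 8) :
    (∫ t in (0:ℝ)..1, |p₁ t|) = 5/16 - Real.sqrt 2 / 8 ∧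
    sSup ((fun t => |p₁ t|) '' Icc (0:ℝ) 1) = 1/2 - Real.sqrt 2 / 8 := by
  have hc0 : 0 ≤ √2 / 8 := by positivity
  have hc4 := sqrt_two_div_eight_le
  have hcsq := sqrt_two_div_eight_sq
  generalize √2 / 8 = c at *
  have h2' (t : ℝ) (ht : t ∈ Ioc (1/2 : ℝ) 1) : p₁ t = t - (1 - c) := by rw [h2 t ht]; ring
  have hbound (t : ℝ) (ht : t ∈ Icc (0 : ℝ) 1) : |p₁ t| ≤ 1 / 2 - c := by
    rcases le_or_gt t (1 / 2) with h | h
    · rw [h1 t ⟨ht.1, h⟩]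
      exact (abs_sub_le_max_sub ht.1 h c).trans (max_le (by linarith) (by linarith))
    · rw [h2' t ⟨h, ht.2⟩]
      exact (abs_sub_le_max_sub h.le ht.2 _).trans (max_le (by linarith) (by linarith))
  constructor
  · have hL : EqOn (fun t => |p₁ t|) (fun t => |t - c|) (uIoo 0 (1 / 2)) := fun t ht => by
      rw [uIoo_of_le (by norm_num)] at ht
      simp only [h1 t (Ioo_subset_Icc_self ht)]
    have hR : EqOn (fun t => |p₁ t|) (fun t => |t - (1 - c)|) (uIoo (1 / 2) 1) := fun t ht => by
      rw [uIoo_of_le (by norm_num)] at ht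
      simp only [h2' t (Ioo_subset_Ioc_self ht)]
    rw [integral_eq_add_of_eqOn_uIoo (by fun_prop) (by fun_prop) hL hR,
      integral_abs_sub_const hc0 (by linarith), integral_abs_sub_const (by linarith) (by linarith)]
    linear_combination 2 * hcsq
  · refine IsGreatest.csSup_eq ⟨⟨1 / 2, by norm_num, ?_⟩, ?_⟩
    · show |p₁ (1 / 2)| = 1 / 2 - c
      rw [h1 (1 / 2) (by norm_num), abs_of_nonneg (by linarith)]
    · rintro _ ⟨t, ht, rfl⟩
      exact hbound t ht
end

section
/- If f : [a,b] → ℝ is absolutely continuous with f' ∈ L²(a,b), then |Q(f;a,b)| ≤ √(11/96 - √2/16) · σ(f';a,b) · (b-a)^{3/2}, where Q(f;a,b) = ∫_a^b f - [(√2/8)f(a) + (1-√2/4)f((a+b)/2) + (√2/8)f(b)](b-a) and σ(f';a,b) = (∫_a^b f'(t)² dt - (f(b)-f(a))²/(b-a))^{1/2}. -/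
open MeasureTheory Real Set

lemma my_cs {α : Type*} [MeasurableSpace α] (μ : Measure α) (u v : α → ℝ)
    (hu : Integrable (fun x => u x ^ 2) μ) (hv : Integrable (fun x => v x ^ 2) μ)
    (huv : Integrable (fun x => u x * v x) μ) :
    |∫ x, u x * v x ∂μ| ≤ Real.sqrt (∫ x, u x ^ 2 ∂μ) * Real.sqrt (∫ x, v x ^ 2 ∂μ) := by
  set A := ∫ x, u x ^ 2 ∂μ with hA
  set B := ∫ x, u x * v x ∂μ with hB
  set C := ∫ x, v x ^ 2 ∂μ with hC
  have hA0 : 0 ≤ A := integral_nonneg fun x => sq_nonneg _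
  have hC0 : 0 ≤ C := integral_nonneg fun x => sq_nonneg _
  have key : discrim A (2 * B) C ≤ 0 := by
    apply discrim_le_zero
    intro lam
    have h0 : 0 ≤ ∫ x, (lam * u x + v x) ^ 2 ∂μ := integral_nonneg fun x => sq_nonneg _
    have hexp : ∫ x, (lam * u x + v x) ^ 2 ∂μ
        = A * (lam * lam) + 2 * B * lam + C := by
      have e : (fun x => (lam * u x + v x) ^ 2)
          = fun x => ((lam * lam) * u x ^ 2 + (2 * lam) * (u x * v x)) + v x ^ 2 := by
        funext x; ring
      have i1 : Integrable (fun x => (lam * lam) * u x ^ 2) μ := hu.const_mul _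
      have i2 : Integrable (fun x => (2 * lam) * (u x * v x)) μ := huv.const_mul _
      have i12 : Integrable (fun x => (lam * lam) * u x ^ 2 + (2 * lam) * (u x * v x)) μ :=
        i1.add i2
      rw [e, integral_add i12 hv, integral_add i1 i2, integral_const_mul, integral_const_mul]
      ring
    linarith [hexp ▸ h0]
  have hB2 : B ^ 2 ≤ A * C := by
    have : (2 * B) ^ 2 - 4 * A * C ≤ 0 := key
    nlinarith
  calc |B| = Real.sqrt (B ^ 2) := (Real.sqrt_sq_eq_abs B).symm
    _ ≤ Real.sqrt (A * C) := Real.sqrt_le_sqrt hB2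
    _ = Real.sqrt A * Real.sqrt C := Real.sqrt_mul hA0 _

lemma my_fubini (f' : ℝ → ℝ) (a b : ℝ) (hab : a ≤ b)
    (hint : IntervalIntegrable f' volume a b) :
    ∫ t in Ioc a b, (∫ s in a..t, f' s) = ∫ s in Ioc a b, (b - s) * f' s := by
  set μ := volume.restrict (Ioc a b) with hμ
  have hfin : IsFiniteMeasure μ := by
    constructor
    rw [hμ, Measure.restrict_apply_univ, Real.volume_Ioc]
    exact ENNReal.ofReal_lt_top
  have hf' : Integrable f' μ :=
    (intervalIntegrable_iff_integrableOn_Ioc_of_le hab).mp hint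
  set S : Set (ℝ × ℝ) := {p : ℝ × ℝ | p.2 ≤ p.1} with hS
  have hSm : MeasurableSet S := measurableSet_le measurable_snd measurable_fst
  set F : ℝ × ℝ → ℝ := S.indicator (fun p => f' p.2) with hF
  have hF2 : Integrable (fun p : ℝ × ℝ => f' p.2) (μ.prod μ) := by
    have := (integrable_const (1 : ℝ) (μ := μ)).mul_prod hf'
    simpa using this
  have hFi : Integrable F (μ.prod μ) := hF2.indicator hSm
  have swap : (∫ t, ∫ s, F (t, s) ∂μ ∂μ) = ∫ s, ∫ t, F (t, s) ∂μ ∂μ :=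
    integral_integral_swap (f := fun t s => F (t, s)) hFi
  have lhs_eq : (∫ t, ∫ s, F (t, s) ∂μ ∂μ) = ∫ t in Ioc a b, (∫ s in a..t, f' s) := by
    apply setIntegral_congr_fun measurableSet_Ioc
    intro t ht
    dsimp only
    have e1 : (fun s => F (t, s)) = (Iic t).indicator f' := by
      funext s
      simp only [hF, hS, Set.indicator_apply, Set.mem_setOf_eq, Set.mem_Iic]
    calc ∫ s, F (t, s) ∂μ = ∫ s, (Iic t).indicator f' s ∂μ := by rw [e1]
      _ = ∫ s in Iic t, f' s ∂μ := integral_indicator measurableSet_Iic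
      _ = ∫ s in Iic t ∩ Ioc a b, f' s := by
          rw [hμ, Measure.restrict_restrict measurableSet_Iic]
      _ = ∫ s in Ioc a t, f' s := by
          congr 1
          rw [Set.inter_comm, Set.Ioc_inter_Iic, min_eq_right ht.2]
      _ = ∫ s in a..t, f' s := (intervalIntegral.integral_of_le ht.1.le).symm
  have rhs_eq : (∫ s, ∫ t, F (t, s) ∂μ ∂μ) = ∫ s in Ioc a b, (b - s) * f' s := by
    apply setIntegral_congr_fun measurableSet_Ioc
    intro s hs
    dsimp only
    have e1 : (fun t => F (t, s)) = (Ici s).indicator (fun _ => f' s) := by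
      funext t
      simp only [hF, hS, Set.indicator_apply, Set.mem_setOf_eq, Set.mem_Ici]
    rw [e1, integral_indicator_const _ measurableSet_Ici]
    have : μ (Ici s) = ENNReal.ofReal (b - s) := by
      rw [hμ, Measure.restrict_apply measurableSet_Ici]
      have : Ici s ∩ Ioc a b = Icc s b := by
        ext x
        simp only [mem_inter_iff, mem_Ici, mem_Ioc, mem_Icc]
        exact ⟨fun ⟨h1, _, h3⟩ => ⟨h1, h3⟩, fun ⟨h1, h2⟩ => ⟨h1, lt_of_lt_of_le hs.1 h1, h2⟩⟩
      rw [this, Real.volume_Icc]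
    rw [measureReal_def, this, ENNReal.toReal_ofReal (by linarith [hs.2] : (0:ℝ) ≤ b - s)]
    simp [mul_comm]
  rw [← lhs_eq, swap, rhs_eq]

theorem stmt_13 (f f' : ℝ → ℝ) (a b : ℝ) (hab : a < b)
    (hac : ∀ t ∈ Icc a b, f t = f a + ∫ s in a..t, f' s)
    (hint : IntervalIntegrable f' volume a b)
    (hint2 : IntervalIntegrable (fun t => (f' t)^2) volume a b) :
    |(∫ t in a..b, f t)
        - (Real.sqrt 2 / 8 * f a + (1 - Real.sqrt 2 / 4) * f ((a + b) / 2)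
            + Real.sqrt 2 / 8 * f b) * (b - a)|
      ≤ Real.sqrt (11/96 - Real.sqrt 2 / 16) *
          Real.sqrt ((∫ t in a..b, (f' t)^2) - (f b - f a)^2 / (b - a)) *
          (b - a) ^ ((3:ℝ)/2) := by
  have hle : a ≤ b := hab.le
  have hh : (0:ℝ) < b - a := by linarith
  set m : ℝ := (a + b) / 2 with hm
  have ham : a ≤ m := by rw [hm]; linarith
  have hmb : m ≤ b := by rw [hm]; linarith
  set c : ℝ := Real.sqrt 2 / 8 with hc
  set c0 : ℝ := (f b - f a) / (b - a) with hc0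
  set g : ℝ → ℝ := fun s => f' s - c0 with hg
  set K1 : ℝ → ℝ := fun s => (a + c * (b - a)) - s with hK1
  set K2 : ℝ → ℝ := fun s => (b - c * (b - a)) - s with hK2
  set K : ℝ → ℝ := fun s => if s ≤ m then K1 s else K2 s with hK
  have hK1c : Continuous K1 := by rw [hK1]; exact continuous_const.sub continuous_id
  have hK2c : Continuous K2 := by rw [hK2]; exact continuous_const.sub continuous_id
  have hsub1 : uIcc a m ⊆ uIcc a b := by
    rw [uIcc_of_le ham, uIcc_of_le hle]; exact Icc_subset_Icc le_rfl hmb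
  have hsub2 : uIcc m b ⊆ uIcc a b := by
    rw [uIcc_of_le hmb, uIcc_of_le hle]; exact Icc_subset_Icc ham le_rfl
  have hint_am := hint.mono_set hsub1
  have hint_mb := hint.mono_set hsub2
  have hg_int : IntervalIntegrable g volume a b := hint.sub intervalIntegrable_const
  have hg_am := hg_int.mono_set hsub1
  have hg_mb := hg_int.mono_set hsub2
  have hg2_int : IntervalIntegrable (fun s => g s ^ 2) volume a b := by
    have e : (fun s => g s ^ 2) = fun s => (f' s ^ 2 - (2 * c0) * f' s) + c0 ^ 2 := by
      funext s; simp only [hg]; ring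
    rw [e]
    exact (hint2.sub (hint.const_mul _)).add intervalIntegrable_const
  -- atoms
  set A1 : ℝ := ∫ s in a..m, f' s with hA1
  set A2 : ℝ := ∫ s in m..b, f' s with hA2
  set B1 : ℝ := ∫ s in a..m, s * f' s with hB1
  set B2 : ℝ := ∫ s in m..b, s * f' s with hB2
  have hid1 : IntervalIntegrable (fun s => s * f' s) volume a m :=
    hint_am.continuousOn_mul continuousOn_id
  have hid2 : IntervalIntegrable (fun s => s * f' s) volume m b :=
    hint_mb.continuousOn_mul continuousOn_id
  have Fm : f m = f a + A1 := by rw [hA1]; exact hac m ⟨ham, hmb⟩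
  have Fb : f b = f a + (A1 + A2) := by
    rw [hA1, hA2, intervalIntegral.integral_add_adjacent_intervals hint_am hint_mb]
    exact hac b ⟨hle, le_rfl⟩
  -- step I1
  have hprim : ContinuousOn (fun t => ∫ s in a..t, f' s) (uIcc a b) :=
    intervalIntegral.continuousOn_primitive_interval' hint left_mem_uIcc
  have hFint : IntervalIntegrable (fun t => ∫ s in a..t, f' s) volume a b :=
    hprim.intervalIntegrable
  have I1 : (∫ t in a..b, f t) = f a * (b - a) + ∫ s in Ioc a b, (b - s) * f' s := by
    have e1 : (∫ t in a..b, f t) = ∫ t in a..b, (f a + ∫ s in a..t, f' s) :=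
      intervalIntegral.integral_congr (fun t ht => by
        rw [uIcc_of_le hle] at ht; exact hac t ht)
    rw [e1, intervalIntegral.integral_add intervalIntegrable_const hFint,
      intervalIntegral.integral_const, intervalIntegral.integral_of_le hle,
      my_fubini f' a b hle hint, smul_eq_mul]
    ring
  -- step D
  have hbsf_am : IntervalIntegrable (fun s => (b - s) * f' s) volume a m :=
    hint_am.continuousOn_mul (continuousOn_const.sub continuousOn_id)
  have hbsf_mb : IntervalIntegrable (fun s => (b - s) * f' s) volume m b :=
    hint_mb.continuousOn_mul (continuousOn_const.sub continuousOn_id)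
  have D : (∫ s in Ioc a b, (b - s) * f' s) = b * (A1 + A2) - (B1 + B2) := by
    rw [← intervalIntegral.integral_of_le hle,
      ← intervalIntegral.integral_add_adjacent_intervals hbsf_am hbsf_mb]
    have d1 : (∫ s in a..m, (b - s) * f' s) = b * A1 - B1 := by
      have e : (fun s => (b - s) * f' s) = fun s => b * f' s - s * f' s := by
        funext s; ring
      rw [e, intervalIntegral.integral_sub (hint_am.const_mul b) hid1,
        intervalIntegral.integral_const_mul, hA1, hB1]
    have d2 : (∫ s in m..b, (b - s) * f' s) = b * A2 - B2 := by
      have e : (fun s => (b - s) * f' s) = fun s => b * f' s - s * f' s := by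
        funext s; ring
      rw [e, intervalIntegral.integral_sub (hint_mb.const_mul b) hid2,
        intervalIntegral.integral_const_mul, hA2, hB2]
    rw [d1, d2]; ring
  -- integrability of K pieces
  have hK1g : IntervalIntegrable (fun s => K1 s * g s) volume a m :=
    hg_am.continuousOn_mul hK1c.continuousOn
  have hK2g : IntervalIntegrable (fun s => K2 s * g s) volume m b :=
    hg_mb.continuousOn_mul hK2c.continuousOn
  have hKg_am : IntegrableOn (fun s => K s * g s) (Ioc a m) volume :=
    ((intervalIntegrable_iff_integrableOn_Ioc_of_le ham).mp hK1g).congr_fun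
      (fun s hs => by simp only [hK]; rw [if_pos hs.2]) measurableSet_Ioc
  have hKg_mb : IntegrableOn (fun s => K s * g s) (Ioc m b) volume :=
    ((intervalIntegrable_iff_integrableOn_Ioc_of_le hmb).mp hK2g).congr_fun
      (fun s hs => by simp only [hK]; rw [if_neg (not_le.mpr hs.1)]) measurableSet_Ioc
  -- split of ∫ K g
  have SA : (∫ s in Ioc a b, K s * g s)
      = (∫ s in a..m, K1 s * g s) + ∫ s in m..b, K2 s * g s := by
    rw [← Ioc_union_Ioc_eq_Ioc ham hmb,
      setIntegral_union (Ioc_disjoint_Ioc_of_le le_rfl) measurableSet_Ioc hKg_am hKg_mb]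
    congr 1
    · rw [intervalIntegral.integral_of_le ham]
      exact setIntegral_congr_fun measurableSet_Ioc
        (fun s hs => by simp only [hK]; rw [if_pos hs.2])
    · rw [intervalIntegral.integral_of_le hmb]
      exact setIntegral_congr_fun measurableSet_Ioc
        (fun s hs => by simp only [hK]; rw [if_neg (not_le.mpr hs.1)])
  have hK1i : IntervalIntegrable K1 volume a m := hK1c.intervalIntegrable a m
  have hK2i : IntervalIntegrable K2 volume m b := hK2c.intervalIntegrable m b
  have hK1f : IntervalIntegrable (fun s => K1 s * f' s) volume a m :=
    hint_am.continuousOn_mul hK1c.continuousOn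
  have hK2f : IntervalIntegrable (fun s => K2 s * f' s) volume m b :=
    hint_mb.continuousOn_mul hK2c.continuousOn
  have V1 : (∫ s in a..m, K1 s * f' s) = (a + c * (b - a)) * A1 - B1 := by
    have e : (fun s => K1 s * f' s) = fun s => (a + c * (b - a)) * f' s - s * f' s := by
      funext s; simp only [hK1]; ring
    rw [e, intervalIntegral.integral_sub (hint_am.const_mul _) hid1,
      intervalIntegral.integral_const_mul, hA1, hB1]
  have V2 : (∫ s in m..b, K2 s * f' s) = (b - c * (b - a)) * A2 - B2 := by
    have e : (fun s => K2 s * f' s) = fun s => (b - c * (b - a)) * f' s - s * f' s := by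
      funext s; simp only [hK2]; ring
    rw [e, intervalIntegral.integral_sub (hint_mb.const_mul _) hid2,
      intervalIntegral.integral_const_mul, hA2, hB2]
  have CK1 : (∫ s in a..m, K1 s) = (a + c * (b - a)) * (m - a) - (m^2 - a^2)/2 := by
    have e : K1 = fun s => (a + c * (b - a)) - s := hK1
    rw [e, intervalIntegral.integral_sub intervalIntegrable_const intervalIntegral.intervalIntegrable_id,
      intervalIntegral.integral_const, integral_id, smul_eq_mul]
    ring
  have CK2 : (∫ s in m..b, K2 s) = (b - c * (b - a)) * (b - m) - (b^2 - m^2)/2 := by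
    have e : K2 = fun s => (b - c * (b - a)) - s := hK2
    rw [e, intervalIntegral.integral_sub intervalIntegrable_const intervalIntegral.intervalIntegrable_id,
      intervalIntegral.integral_const, integral_id, smul_eq_mul]
    ring
  have P1 : (∫ s in a..m, K1 s * g s)
      = ((a + c * (b - a)) * A1 - B1)
        - c0 * ((a + c * (b - a)) * (m - a) - (m^2 - a^2)/2) := by
    have e : (fun s => K1 s * g s) = fun s => K1 s * f' s - c0 * K1 s := by
      funext s; simp only [hg]; ring
    rw [e, intervalIntegral.integral_sub hK1f (hK1i.const_mul c0),
      intervalIntegral.integral_const_mul, V1, CK1]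
  have P2 : (∫ s in m..b, K2 s * g s)
      = ((b - c * (b - a)) * A2 - B2)
        - c0 * ((b - c * (b - a)) * (b - m) - (b^2 - m^2)/2) := by
    have e : (fun s => K2 s * g s) = fun s => K2 s * f' s - c0 * K2 s := by
      funext s; simp only [hg]; ring
    rw [e, intervalIntegral.integral_sub hK2f (hK2i.const_mul c0),
      intervalIntegral.integral_const_mul, V2, CK2]
  -- master identity
  have h24 : Real.sqrt 2 / 4 = 2 * c := by rw [hc]; ring
  have main_eq : (∫ t in a..b, f t)
      - (c * f a + (1 - Real.sqrt 2 / 4) * f m + c * f b) * (b - a)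
      = ∫ s in Ioc a b, K s * g s := by
    rw [SA, P1, P2, I1, D, Fm, Fb, h24, hm]
    ring
  rw [main_eq]
  -- Cauchy-Schwarz
  have hK2sq_am : IntegrableOn (fun s => K s ^ 2) (Ioc a m) volume :=
    ((intervalIntegrable_iff_integrableOn_Ioc_of_le ham).mp
        ((hK1c.pow 2).intervalIntegrable a m)).congr_fun
      (fun s hs => by simp only [hK]; rw [if_pos hs.2]; rfl) measurableSet_Ioc
  have hK2sq_mb : IntegrableOn (fun s => K s ^ 2) (Ioc m b) volume :=
    ((intervalIntegrable_iff_integrableOn_Ioc_of_le hmb).mp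
        ((hK2c.pow 2).intervalIntegrable m b)).congr_fun
      (fun s hs => by simp only [hK]; rw [if_neg (not_le.mpr hs.1)]; rfl) measurableSet_Ioc
  have hKsq : Integrable (fun s => K s ^ 2) (volume.restrict (Ioc a b)) := by
    rw [← Ioc_union_Ioc_eq_Ioc ham hmb]
    exact (integrableOn_union.mpr ⟨hK2sq_am, hK2sq_mb⟩)
  have hgsq : Integrable (fun s => g s ^ 2) (volume.restrict (Ioc a b)) :=
    (intervalIntegrable_iff_integrableOn_Ioc_of_le hle).mp hg2_int
  have hKg : Integrable (fun s => K s * g s) (volume.restrict (Ioc a b)) := by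
    rw [← Ioc_union_Ioc_eq_Ioc ham hmb]
    exact (integrableOn_union.mpr ⟨hKg_am, hKg_mb⟩)
  have CS := my_cs (volume.restrict (Ioc a b)) K g hKsq hgsq hKg
  -- value of ∫ K^2
  have h2 : Real.sqrt 2 ^ 2 = 2 := Real.sq_sqrt (by norm_num)
  have CKtot : (∫ s in Ioc a b, K s ^ 2)
      = (11/96 - Real.sqrt 2 / 16) * (b - a)^3 := by
    rw [← Ioc_union_Ioc_eq_Ioc ham hmb,
      setIntegral_union (Ioc_disjoint_Ioc_of_le le_rfl) measurableSet_Ioc hK2sq_am hK2sq_mb]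
    have q1 : (∫ s in Ioc a m, K s ^ 2) = ∫ s in a..m, K1 s ^ 2 := by
      rw [intervalIntegral.integral_of_le ham]
      exact setIntegral_congr_fun measurableSet_Ioc
        (fun s hs => by simp only [hK]; rw [if_pos hs.2])
    have q2 : (∫ s in Ioc m b, K s ^ 2) = ∫ s in m..b, K2 s ^ 2 := by
      rw [intervalIntegral.integral_of_le hmb]
      exact setIntegral_congr_fun measurableSet_Ioc
        (fun s hs => by simp only [hK]; rw [if_neg (not_le.mpr hs.1)])
    have r1 : (∫ s in a..m, K1 s ^ 2)
        = (a + c * (b - a))^2 * (m - a) - (2 * (a + c * (b - a))) * ((m^2 - a^2)/2)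
          + (m^3 - a^3)/3 := by
      have e : (fun s => K1 s ^ 2)
          = fun s => ((a + c * (b - a))^2 - (2 * (a + c * (b - a))) * s) + s^2 := by
        funext s; simp only [hK1]; ring
      rw [e, intervalIntegral.integral_add
          (intervalIntegrable_const.sub (intervalIntegral.intervalIntegrable_id.const_mul _))
          (intervalIntegral.intervalIntegrable_pow 2),
        intervalIntegral.integral_sub intervalIntegrable_const
          (intervalIntegral.intervalIntegrable_id.const_mul _),
        intervalIntegral.integral_const, intervalIntegral.integral_const_mul,
        integral_id, integral_pow, smul_eq_mul]
      push_cast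
      ring
    have r2 : (∫ s in m..b, K2 s ^ 2)
        = (b - c * (b - a))^2 * (b - m) - (2 * (b - c * (b - a))) * ((b^2 - m^2)/2)
          + (b^3 - m^3)/3 := by
      have e : (fun s => K2 s ^ 2)
          = fun s => ((b - c * (b - a))^2 - (2 * (b - c * (b - a))) * s) + s^2 := by
        funext s; simp only [hK2]; ring
      rw [e, intervalIntegral.integral_add
          (intervalIntegrable_const.sub (intervalIntegral.intervalIntegrable_id.const_mul _))
          (intervalIntegral.intervalIntegrable_pow 2),
        intervalIntegral.integral_sub intervalIntegrable_const
          (intervalIntegral.intervalIntegrable_id.const_mul _),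
        intervalIntegral.integral_const, intervalIntegral.integral_const_mul,
        integral_id, integral_pow, smul_eq_mul]
      push_cast
      ring
    rw [q1, q2, r1, r2, hc, hm]
    linear_combination ((b - a)^3/64) * h2
  -- value of ∫ g^2
  have hsumf' : (∫ s in a..b, f' s) = f b - f a := by
    have := hac b ⟨hle, le_rfl⟩; linarith
  have Cg : (∫ s in Ioc a b, g s ^ 2)
      = (∫ t in a..b, (f' t)^2) - (f b - f a)^2 / (b - a) := by
    rw [← intervalIntegral.integral_of_le hle]
    have e : (fun s => g s ^ 2) = fun s => (f' s ^ 2 - (2 * c0) * f' s) + c0 ^ 2 := by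
      funext s; simp only [hg]; ring
    rw [e, intervalIntegral.integral_add
        (hint2.sub (hint.const_mul _)) intervalIntegrable_const,
      intervalIntegral.integral_sub hint2 (hint.const_mul _),
      intervalIntegral.integral_const_mul, intervalIntegral.integral_const,
      hsumf', smul_eq_mul, hc0]
    field_simp
    ring
  rw [CKtot, Cg] at CS
  have hC0 : (0:ℝ) ≤ 11/96 - Real.sqrt 2 / 16 := by
    have h1 : Real.sqrt 2 ≤ 11/6 := by
      have := Real.sqrt_le_sqrt (show (2:ℝ) ≤ (11/6)^2 by norm_num)
      rwa [Real.sqrt_sq (by norm_num : (0:ℝ) ≤ 11/6)] at this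
    linarith
  have hsq3 : Real.sqrt ((b - a)^3) = (b - a) ^ ((3:ℝ)/2) := by
    rw [Real.sqrt_eq_rpow, ← Real.rpow_natCast (b - a) 3, ← Real.rpow_mul hh.le]
    norm_num
  rw [Real.sqrt_mul hC0, hsq3] at CS
  calc |∫ s in Ioc a b, K s * g s|
      ≤ Real.sqrt (11/96 - Real.sqrt 2 / 16) * (b - a) ^ ((3:ℝ)/2) *
        Real.sqrt ((∫ t in a..b, (f' t)^2) - (f b - f a)^2 / (b - a)) := CS
    _ = _ := by ring
end
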